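/- arXiv:1303.0572 — 2 statements merged into one kernel-verified Lean document; each statement's English description precedes it below -/
import Mathlib

section
/- For every positive integer n, every type t on X, every real delta, and every y^n in Y^n, the DIMC jar satisfies |J_t(y^n)| <= e^{n ( H(t) - I(t;P) + delta )}. -/
/-!
The weights `∏ᵢ t(xᵢ) p(yᵢ|xᵢ) / q_t(yᵢ)` are a sub-probability distribution on `X^n` (the
posterior of `x^n` given `y^n` when `x^n` is drawn i.i.d. from `t`). On a sequence of type `t`
the prior factor is `e^{-n H(t)}`, and on the jar the likelihood ratio exceeds `e^{n (I(t;P) - δ)}`,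
so every element of the jar has weight at least `e^{-n (H(t) - I(t;P) + δ)}`.
-/

open scoped Classical BigOperators
open Finset

noncomputable section

/-- The Gaussian tail function `Q(s) = (1/sqrt(2*pi)) * int_s^infty e^{-x^2/2} dx`. -/
def gaussQ (s : ℝ) : ℝ :=
  (1 / Real.sqrt (2 * Real.pi)) * ∫ x in Set.Ioi s, Real.exp (-x ^ 2 / 2)

/-- The inverse of the Gaussian tail function (on `(0,1)`). -/
def gaussQinv : ℝ → ℝ := Function.invFun gaussQ

/-- A discrete memoryless channel with finite input alphabet `X` and finite output
alphabet `Y`: transition probabilities `p x y = p(y|x)` with rows summing to one. -/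
structure DIMC (X Y : Type) [Fintype X] [Fintype Y] where
  p : X → Y → ℝ
  p_nonneg : ∀ x y, 0 ≤ p x y
  p_sum : ∀ x, ∑ y, p x y = 1

/-- `t` is a type (an empirical distribution with denominator `n`) on `X`. -/
def IsType {X : Type} [Fintype X] (n : ℕ) (t : X → ℝ) : Prop :=
  (∀ x, 0 ≤ t x) ∧ (∑ x, t x = 1) ∧ ∀ x, ∃ m : ℕ, t x * n = m

/-- `T^n_t`: the set of sequences of length `n` with empirical distribution `t`. -/
def typeClass {X : Type} [Fintype X] (n : ℕ) (t : X → ℝ) : Finset (Fin n → X) :=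
  Finset.univ.filter fun xv =>
    ∀ x, ((Finset.univ.filter fun i => xv i = x).card : ℝ) = (n : ℝ) * t x

/-- Entropy `H(t)` of a distribution on `X` (in nats). -/
def typeEnt {X : Type} [Fintype X] (t : X → ℝ) : ℝ := -∑ x, t x * Real.log (t x)

namespace DIMC

variable {X Y : Type} [Fintype X] [Fintype Y] (W : DIMC X Y)

/-- Output distribution `q_t` induced by input distribution `t`. -/
def qOut (t : X → ℝ) (y : Y) : ℝ := ∑ x, t x * W.p x y

/-- Mutual information `I(t;P)` (with the convention `0 ln 0 = 0`). -/
def mutInfo (t : X → ℝ) : ℝ :=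
  ∑ x, t x * ∑ y, W.p x y * Real.log (W.p x y / W.qOut t y)

/-- The DIMC jar based on type `t`. -/
def dJar (n : ℕ) (t : X → ℝ) (δ : ℝ) (yv : Fin n → Y) : Finset (Fin n → X) :=
  (typeClass n t).filter fun xv =>
    0 < (∏ i, W.p (xv i) (yv i)) ∧
      -(1 / (n : ℝ)) * ∑ i, Real.log (W.p (xv i) (yv i) / W.qOut t (yv i)) <
        -W.mutInfo t + δ

/-- `P_{t,δ}`, expressed as a function of the transmitted sequence `xv` (it depends on
`xv` only through its type `t`). -/
def Ptd (n : ℕ) (t : X → ℝ) (δ : ℝ) (xv : Fin n → X) : ℝ :=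
  ∑ yv : Fin n → Y,
    (∏ i, W.p (xv i) (yv i)) *
      (if -W.mutInfo t + δ ≤
          -(1 / (n : ℝ)) * ∑ i, Real.log (W.p (xv i) (yv i) / W.qOut t (yv i))
        then 1 else 0)

/-- Jar-decoding error probability for the Shannon random code ensemble with fixed
codeword type `t`: the `2^k` codewords are i.i.d. uniform on `T^n_t`, the message is
uniform, and the channel acts memorylessly. -/
def PerrT (n k : ℕ) (t : X → ℝ) (δ : ℝ) : ℝ :=
  ∑ cb : Fin (2 ^ k) → Fin n → X, ∑ q : Fin (2 ^ k), ∑ yv : Fin n → Y,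
    (∏ j, if cb j ∈ typeClass n t then 1 / ((typeClass n t).card : ℝ) else 0) *
      ((1 / (2 ^ k : ℝ)) *
        ((∏ i, W.p (cb q i) (yv i)) *
          (if cb q ∉ W.dJar n t δ yv ∨ ∃ j, cb j ≠ cb q ∧ cb j ∈ W.dJar n t δ yv
            then 1 else 0)))

end DIMC

section TypeClass

variable {X : Type} [Fintype X] {n : ℕ} {t : X → ℝ} {xv : Fin n → X}

lemma pos_of_mem_typeClass (hxv : xv ∈ typeClass n t) (i : Fin n) : 0 < t (xv i) := by
  have hcount := (mem_filter.1 hxv).2 (xv i)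
  have hone : (1 : ℝ) ≤ (univ.filter fun j => xv j = xv i).card :=
    Nat.one_le_cast.2 (card_pos.2 ⟨i, by simp⟩)
  by_contra! hle
  nlinarith [mul_nonpos_of_nonneg_of_nonpos (Nat.cast_nonneg (α := ℝ) n) hle]

lemma sum_log_of_mem_typeClass (hxv : xv ∈ typeClass n t) :
    ∑ i, Real.log (t (xv i)) = -(n * typeEnt t) := by
  rw [← sum_fiberwise' univ xv (fun x => Real.log (t x)), typeEnt, mul_neg, neg_neg,
    mul_sum]
  refine sum_congr rfl fun x _ => ?_
  rw [sum_const, nsmul_eq_mul, (mem_filter.1 hxv).2 x, mul_assoc]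

end TypeClass

namespace DIMC

variable {X Y : Type} [Fintype X] [Fintype Y] (W : DIMC X Y)

def posterior {n : ℕ} (t : X → ℝ) (yv : Fin n → Y) (xv : Fin n → X) : ℝ :=
  ∏ i, t (xv i) * W.p (xv i) (yv i) / W.qOut t (yv i)

variable {W} {n : ℕ} {t : X → ℝ} {δ : ℝ} {yv : Fin n → Y} {xv : Fin n → X}

lemma qOut_nonneg (ht : ∀ x, 0 ≤ t x) (y : Y) : 0 ≤ W.qOut t y :=
  sum_nonneg fun x _ => mul_nonneg (ht x) (W.p_nonneg x y)

lemma qOut_pos (ht : ∀ x, 0 ≤ t x) {x : X} {y : Y} (hx : 0 < t x) (hp : 0 < W.p x y) :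
    0 < W.qOut t y :=
  (mul_pos hx hp).trans_le <|
    single_le_sum (f := fun x => t x * W.p x y)
      (fun x _ => mul_nonneg (ht x) (W.p_nonneg x y)) (mem_univ x)

lemma posterior_nonneg (ht : ∀ x, 0 ≤ t x) (yv : Fin n → Y) (xv : Fin n → X) :
    0 ≤ W.posterior t yv xv :=
  prod_nonneg fun _ _ =>
    div_nonneg (mul_nonneg (ht _) (W.p_nonneg _ _)) (qOut_nonneg ht _)

-- Each output letter contributes the factor `q_t(y) / q_t(y)`, which is `0` when `q_t(y) = 0`.
lemma sum_posterior_le_one (ht : ∀ x, 0 ≤ t x) (yv : Fin n → Y) :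
    ∑ xv, W.posterior t yv xv ≤ 1 := by
  calc ∑ xv, W.posterior t yv xv = ∏ i, ∑ x, t x * W.p x (yv i) / W.qOut t (yv i) :=
        (Fintype.prod_sum fun i x => t x * W.p x (yv i) / W.qOut t (yv i)).symm
    _ ≤ 1 := by
      refine prod_le_one (fun _ _ => sum_nonneg fun x _ => ?_) fun i _ => ?_
      · exact div_nonneg (mul_nonneg (ht x) (W.p_nonneg _ _)) (qOut_nonneg ht _)
      · rw [← sum_div]
        exact div_self_le_one _

lemma p_pos_of_mem_dJar (hxv : xv ∈ W.dJar n t δ yv) (i : Fin n) :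
    0 < W.p (xv i) (yv i) :=
  (W.p_nonneg _ _).lt_of_ne' <|
    prod_ne_zero_iff.1 (mem_filter.1 hxv).2.1.ne' i (mem_univ i)

-- For `n = 0` both sides vanish, the sum being empty.
lemma mul_sub_le_sum_log_of_mem_dJar (hxv : xv ∈ W.dJar n t δ yv) :
    n * (W.mutInfo t - δ) ≤ ∑ i, Real.log (W.p (xv i) (yv i) / W.qOut t (yv i)) := by
  have hlt := (mem_filter.1 hxv).2.2
  rcases n.eq_zero_or_pos with rfl | hn
  · simp
  · have := mul_lt_mul_of_pos_left hlt (Nat.cast_pos (α := ℝ).2 hn)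
    field_simp at this
    linarith

lemma exp_le_posterior_of_mem_dJar (ht : ∀ x, 0 ≤ t x) (hxv : xv ∈ W.dJar n t δ yv) :
    Real.exp (-(n * (typeEnt t - W.mutInfo t + δ))) ≤ W.posterior t yv xv := by
  have htpos := pos_of_mem_typeClass (mem_filter.1 hxv).1
  have hppos := p_pos_of_mem_dJar hxv
  have hqpos i : 0 < W.qOut t (yv i) := qOut_pos ht (htpos i) (hppos i)
  have hfactor i : 0 < t (xv i) * W.p (xv i) (yv i) / W.qOut t (yv i) :=
    div_pos (mul_pos (htpos i) (hppos i)) (hqpos i)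
  have hlog : Real.log (W.posterior t yv xv) =
      ∑ i, Real.log (t (xv i)) + ∑ i, Real.log (W.p (xv i) (yv i) / W.qOut t (yv i)) := by
    rw [posterior, Real.log_prod fun i _ => (hfactor i).ne', ← sum_add_distrib]
    refine sum_congr rfl fun i _ => ?_
    rw [mul_div_assoc, Real.log_mul (htpos i).ne' (div_pos (hppos i) (hqpos i)).ne']
  have hpos : 0 < W.posterior t yv xv := prod_pos fun i _ => hfactor i
  rw [← Real.exp_log hpos, Real.exp_le_exp, hlog, sum_log_of_mem_typeClass (mem_filter.1 hxv).1]
  linarith [mul_sub_le_sum_log_of_mem_dJar hxv]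

end DIMC

theorem djar_card_le_general {X Y : Type} [Fintype X] [Fintype Y] (W : DIMC X Y)
    (n : ℕ) (t : X → ℝ) (ht : IsType n t) (δ : ℝ) (yv : Fin n → Y) :
    ((W.dJar n t δ yv).card : ℝ) ≤
      Real.exp ((n : ℝ) * (typeEnt t - W.mutInfo t + δ)) := by
  set a := (n : ℝ) * (typeEnt t - W.mutInfo t + δ)
  have hcard : ((W.dJar n t δ yv).card : ℝ) * Real.exp (-a) ≤ 1 :=
    calc ((W.dJar n t δ yv).card : ℝ) * Real.exp (-a)
        ≤ ∑ xv ∈ W.dJar n t δ yv, W.posterior t yv xv := by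
          rw [← nsmul_eq_mul]
          exact card_nsmul_le_sum _ _ _ fun xv hxv => DIMC.exp_le_posterior_of_mem_dJar ht.1 hxv
      _ ≤ ∑ xv, W.posterior t yv xv :=
          sum_le_sum_of_subset_of_nonneg (subset_univ _) fun xv _ _ =>
            DIMC.posterior_nonneg ht.1 yv xv
      _ ≤ 1 := DIMC.sum_posterior_le_one ht.1 yv
  rwa [Real.exp_neg, ← div_eq_mul_inv, div_le_one (Real.exp_pos a)] at hcard

/-- for every positive `n`, every type `t`, every real `δ` and every
output sequence `y^n`, the DIMC jar satisfies `|J_t(y^n)| ≤ e^{n (H(t) - I(t;P) + δ)}`. -/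
theorem djar_card_le {X Y : Type} [Fintype X] [Fintype Y] (W : DIMC X Y)
    (n : ℕ) (hn : 0 < n) (t : X → ℝ) (ht : IsType n t) (δ : ℝ) (yv : Fin n → Y) :
    ((W.dJar n t δ yv).card : ℝ) ≤
      Real.exp ((n : ℝ) * (typeEnt t - W.mutInfo t + δ)) :=
  djar_card_le_general W n t ht δ yv
end
end

section
/- (NEP with respect to conditional entropy, part (a)) Assume sigma^2 = sum_{x,y} p(x,y)( -ln p(x|y) - H(X|Y) )^2 > 0. Then there exist delta* > 0 and K > 0 such that for every delta in (0, delta*]: | r(delta) - delta^2/(2 sigma^2) | <= K delta^3. -/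
open scoped Classical BigOperators
open Finset

noncomputable section

/-- A joint pmf on finite alphabets `X` and `Y`, with all probabilities positive. -/
structure JointPMF (X Y : Type) [Fintype X] [Fintype Y] where
  p : X → Y → ℝ
  p_pos : ∀ x y, 0 < p x y
  p_sum : ∑ x, ∑ y, p x y = 1

namespace JointPMF

variable {X Y : Type} [Fintype X] [Fintype Y] (P : JointPMF X Y)

/-- Marginal `p(y)`. -/
def pY (y : Y) : ℝ := ∑ x, P.p x y

/-- Conditional pmf `p(x|y)`. -/
def pXY (x : X) (y : Y) : ℝ := P.p x y / P.pY y

/-- Conditional entropy `H(X|Y)` (in nats). -/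
def condEnt : ℝ := ∑ x, ∑ y, P.p x y * (-Real.log (P.pXY x y))

/-- `Pr{ -(1/n) sum_i ln p(X_i|Y_i) > H(X|Y) + δ }` for `n` i.i.d. copies of `(X,Y)`. -/
def tailProb (n : ℕ) (δ : ℝ) : ℝ :=
  ∑ xv : Fin n → X, ∑ yv : Fin n → Y,
    (∏ i, P.p (xv i) (yv i)) *
      (if P.condEnt + δ < -(1 / (n : ℝ)) * ∑ i, Real.log (P.pXY (xv i) (yv i))
        then 1 else 0)

/-- `ln sum_{x,y} p(y) p(x|y)^{1-λ}`. -/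
def tiltLogSum (lam : ℝ) : ℝ :=
  Real.log (∑ x, ∑ y, P.pY y * P.pXY x y ^ (1 - lam))

/-- The rate function `r(δ)`. -/
def rFun (δ : ℝ) : ℝ :=
  sSup ((fun lam => lam * (P.condEnt + δ) - P.tiltLogSum lam) '' Set.Ici 0)

/-- The tilting factor `f_λ(x,y)`. -/
def fLam (lam : ℝ) (x : X) (y : Y) : ℝ :=
  P.pXY x y ^ (-lam) / ∑ u, ∑ v, P.pY v * P.pXY u v ^ (1 - lam)

/-- `δ(λ)`. -/
def deltaLam (lam : ℝ) : ℝ :=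
  (∑ x, ∑ y, P.p x y * (P.fLam lam x y * (-Real.log (P.pXY x y)))) - P.condEnt

/-- `σ²(λ)`. -/
def sigmaSq (lam : ℝ) : ℝ :=
  ∑ x, ∑ y,
    P.fLam lam x y * (P.pY y * (P.pXY x y *
      |(-Real.log (P.pXY x y)) - (P.condEnt + P.deltaLam lam)| ^ 2))

/-- `M(λ)`. -/
def Mthird (lam : ℝ) : ℝ :=
  ∑ x, ∑ y,
    P.fLam lam x y * (P.pY y * (P.pXY x y *
      |(-Real.log (P.pXY x y)) - (P.condEnt + P.deltaLam lam)| ^ 3))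

/-- `σ² = sum_{x,y} p(x,y) (-ln p(x|y) - H(X|Y))²`. -/
def sigma0 : ℝ :=
  ∑ x, ∑ y, P.p x y * ((-Real.log (P.pXY x y)) - P.condEnt) ^ 2

/-- `M = sum_{x,y} p(x,y) |-ln p(x|y) - H(X|Y)|³`. -/
def M0 : ℝ :=
  ∑ x, ∑ y, P.p x y * |(-Real.log (P.pXY x y)) - P.condEnt| ^ 3

/-- `ξ̄(λ,n)` with the Berry-Esseen constant `C = 0.4784`. -/
def xiBar (lam : ℝ) (n : ℕ) : ℝ :=
  2 * 0.4784 * P.Mthird lam / (Real.sqrt n * Real.sqrt (P.sigmaSq lam) ^ 3) +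
    Real.exp ((n : ℝ) * lam ^ 2 * P.sigmaSq lam / 2) *
      (gaussQ (Real.sqrt n * lam * Real.sqrt (P.sigmaSq lam)) -
        gaussQ
          (gaussQinv
              (0.4784 * P.Mthird lam /
                (Real.sqrt n * Real.sqrt (P.sigmaSq lam) ^ 3)) +
            Real.sqrt n * lam * Real.sqrt (P.sigmaSq lam)))

/-- `ξ̲(λ,n)` with the Berry-Esseen constant `C = 0.4784`. -/
def xiUnder (lam : ℝ) (n : ℕ) : ℝ :=
  Real.exp ((n : ℝ) * lam ^ 2 * P.sigmaSq lam / 2) *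
    gaussQ
      (gaussQinv
          (1 / 2 - 2 * 0.4784 * P.Mthird lam /
            (Real.sqrt n * Real.sqrt (P.sigmaSq lam) ^ 3)) +
        Real.sqrt n * lam * Real.sqrt (P.sigmaSq lam))

end JointPMF

/-!
With `c(x,y) = -ln p(x|y) - H(X|Y)`, the function `φ(λ) = ln ∑ p(y) p(x|y)^(1-λ) - λ H(X|Y)` is
the cumulant generating function of `c` under `p`, and `r(δ) = sup_{λ ≥ 0} (λ δ - φ(λ))`.
Second-order expansions of `exp` and `log` give `φ(λ) = σ² λ² / 2 + O(λ³)` near `0`, so the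
supremum over small `λ` is `δ² / (2σ²) + O(δ³)`, attained near `λ = δ / σ²`. Since `φ` is
convex with `φ(0) = 0`, it grows at least linearly beyond any fixed `ℓ > 0`, so large `λ`
contribute nothing once `δ` is small.
-/

open Set

namespace Real

theorem abs_exp_sub_quadratic_le {x : ℝ} (hx : |x| ≤ 1) :
    |exp x - (1 + x + x ^ 2 / 2)| ≤ |x| ^ 3 := by
  have h := exp_bound hx (n := 3) (by norm_num)
  norm_num [Finset.sum_range_succ, Nat.factorial] at h
  exact h.trans (by nlinarith [pow_nonneg (abs_nonneg x) 3])

theorem abs_log_one_add_sub_self_le {u : ℝ} (hu : |u| ≤ 1 / 2) :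
    |log (1 + u) - u| ≤ 2 * u ^ 2 := by
  have h := abs_log_sub_add_sum_range_le (x := -u) (by rw [abs_neg]; linarith) 1
  simp only [abs_neg, sub_neg_eq_add, Finset.sum_range_one] at h
  calc |log (1 + u) - u| = |(-u) ^ (0 + 1) / ((0 : ℕ) + 1) + log (1 + u)| := by
        congr 1; push_cast; ring
    _ ≤ |u| ^ 2 / (1 - |u|) := h
    _ ≤ |u| ^ 2 / (1 / 2) := by gcongr; linarith
    _ = 2 * u ^ 2 := by rw [sq_abs]; ring

end Real

section FiniteCgf

variable {ι : Type*} [Fintype ι]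

def finCgf (p c : ι → ℝ) (t : ℝ) : ℝ := Real.log (∑ i, p i * Real.exp (t * c i))

variable {p c : ι → ℝ}

theorem sum_mul_exp_pos (hp : ∀ i, 0 ≤ p i) (hs : ∑ i, p i = 1) (t : ℝ) :
    0 < ∑ i, p i * Real.exp (t * c i) := by
  obtain ⟨i, -, hi⟩ := Finset.exists_lt_of_sum_lt (s := univ) (f := fun _ => (0 : ℝ)) (g := p)
    (by simp [hs])
  exact Finset.sum_pos' (fun j _ => mul_nonneg (hp j) (Real.exp_pos _).le)
    ⟨i, mem_univ i, mul_pos hi (Real.exp_pos _)⟩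

theorem abs_sum_mul_exp_sub_quadratic_le (hp : ∀ i, 0 ≤ p i) (hs : ∑ i, p i = 1)
    (hmean : ∑ i, p i * c i = 0) {B t : ℝ} (hc : ∀ i, |c i| ≤ B) (ht : |t| * B ≤ 1) :
    |∑ i, p i * Real.exp (t * c i) - (1 + t ^ 2 * (∑ i, p i * c i ^ 2) / 2)| ≤
      (|t| * B) ^ 3 := by
  have hexpand : 1 + t ^ 2 * (∑ i, p i * c i ^ 2) / 2 =
      ∑ i, p i * (1 + t * c i + (t * c i) ^ 2 / 2) := by
    have (i : ι) : p i * (1 + t * c i + (t * c i) ^ 2 / 2) =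
        p i + t * (p i * c i) + t ^ 2 / 2 * (p i * c i ^ 2) := by ring
    simp only [this, sum_add_distrib, ← mul_sum, hs, hmean]
    ring
  have htc (i : ι) : |t * c i| ≤ |t| * B := by
    rw [abs_mul]; exact mul_le_mul_of_nonneg_left (hc i) (abs_nonneg t)
  rw [hexpand, ← sum_sub_distrib]
  calc |∑ i, (p i * Real.exp (t * c i) - p i * (1 + t * c i + (t * c i) ^ 2 / 2))|
      ≤ ∑ i, p i * |Real.exp (t * c i) - (1 + t * c i + (t * c i) ^ 2 / 2)| := by
        refine (abs_sum_le_sum_abs _ _).trans_eq (sum_congr rfl fun i _ => ?_)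
        rw [← mul_sub, abs_mul, abs_of_nonneg (hp i)]
    _ ≤ ∑ i, p i * (|t| * B) ^ 3 := by
        gcongr with i
        · exact hp i
        · exact (Real.abs_exp_sub_quadratic_le ((htc i).trans ht)).trans
            (pow_le_pow_left₀ (abs_nonneg _) (htc i) 3)
    _ = (|t| * B) ^ 3 := by rw [← sum_mul, hs, one_mul]

theorem abs_finCgf_sub_quadratic_le (hp : ∀ i, 0 ≤ p i) (hs : ∑ i, p i = 1)
    (hmean : ∑ i, p i * c i = 0) {B t : ℝ} (hc : ∀ i, |c i| ≤ B) (ht : |t| * B ≤ 1 / 2) :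
    |finCgf p c t - t ^ 2 * (∑ i, p i * c i ^ 2) / 2| ≤ 2 * (|t| * B) ^ 3 := by
  set V := ∑ i, p i * c i ^ 2
  set u := ∑ i, p i * Real.exp (t * c i) - 1
  obtain ⟨i₀⟩ : Nonempty ι := by
    by_contra h
    simp [not_nonempty_iff.1 h] at hs
  have hs₀ : 0 ≤ |t| * B := mul_nonneg (abs_nonneg t) ((abs_nonneg _).trans (hc i₀))
  have hV₀ : 0 ≤ V := sum_nonneg fun i _ => mul_nonneg (hp i) (sq_nonneg _)
  have hVB : t ^ 2 * V ≤ (|t| * B) ^ 2 := by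
    calc t ^ 2 * V ≤ t ^ 2 * ∑ i, p i * B ^ 2 := by
          refine mul_le_mul_of_nonneg_left (sum_le_sum fun i _ => ?_) (sq_nonneg t)
          exact mul_le_mul_of_nonneg_left (sq_le_sq' (abs_le.1 (hc i)).1 (abs_le.1 (hc i)).2)
            (hp i)
      _ = (|t| * B) ^ 2 := by rw [← sum_mul, hs, one_mul, mul_pow, sq_abs]
  have hu : |u - t ^ 2 * V / 2| ≤ (|t| * B) ^ 3 := by
    have := abs_sum_mul_exp_sub_quadratic_le hp hs hmean hc (ht.trans (by norm_num))
    convert this using 2; ring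
  have hu_small : |u| ≤ (|t| * B) ^ 2 := by
    have := abs_sub_abs_le_abs_sub u (t ^ 2 * V / 2)
    rw [abs_of_nonneg (by positivity : 0 ≤ t ^ 2 * V / 2)] at this
    nlinarith
  have hlog := Real.abs_log_one_add_sub_self_le (u := u) (by nlinarith)
  have hu2 : u ^ 2 ≤ ((|t| * B) ^ 2) ^ 2 := by
    rw [← sq_abs]; exact pow_le_pow_left₀ (abs_nonneg _) hu_small 2
  have hfin : finCgf p c t = Real.log (1 + u) := by simp only [finCgf, u]; ring_nf
  rw [hfin]
  calc |Real.log (1 + u) - t ^ 2 * V / 2|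
      ≤ |Real.log (1 + u) - u| + |u - t ^ 2 * V / 2| := abs_sub_le _ _ _
    _ ≤ 2 * ((|t| * B) ^ 2) ^ 2 + (|t| * B) ^ 3 := by linarith
    _ ≤ 2 * (|t| * B) ^ 3 := by nlinarith [pow_nonneg hs₀ 3]

theorem finCgf_zero (hs : ∑ i, p i = 1) : finCgf p c 0 = 0 := by
  simp [finCgf, hs]

theorem convexOn_finCgf (hp : ∀ i, 0 ≤ p i) (hs : ∑ i, p i = 1) :
    ConvexOn ℝ univ (finCgf p c) := by
  refine ⟨convex_univ, fun a _ b _ α β hα hβ hαβ => ?_⟩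
  set A := ∑ i, p i * Real.exp (a * c i)
  set B := ∑ i, p i * Real.exp (b * c i)
  have hA := sum_mul_exp_pos (c := c) hp hs a
  have hB := sum_mul_exp_pos (c := c) hp hs b
  -- Hölder's inequality, via the convexity of `exp` applied to the normalized terms
  have hpoint (i : ι) : Real.exp ((α • a + β • b) * c i) ≤
      (α * (Real.exp (a * c i) / A) + β * (Real.exp (b * c i) / B)) *
        Real.exp (α * Real.log A + β * Real.log B) := by
    have hexp := convexOn_exp.2 (mem_univ (a * c i - Real.log A))
      (mem_univ (b * c i - Real.log B)) hα hβ hαβ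
    rw [smul_eq_mul, smul_eq_mul, smul_eq_mul, smul_eq_mul, Real.exp_sub, Real.exp_sub,
      Real.exp_log hA, Real.exp_log hB] at hexp
    calc Real.exp ((α • a + β • b) * c i)
        = Real.exp (α * (a * c i - Real.log A) + β * (b * c i - Real.log B)) *
            Real.exp (α * Real.log A + β * Real.log B) := by
          rw [← Real.exp_add, smul_eq_mul, smul_eq_mul]; ring_nf
      _ ≤ _ := by gcongr
  have hsum : ∑ i, p i * Real.exp ((α • a + β • b) * c i) ≤
      Real.exp (α * Real.log A + β * Real.log B) := by
    calc ∑ i, p i * Real.exp ((α • a + β • b) * c i)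
        ≤ ∑ i, p i * ((α * (Real.exp (a * c i) / A) + β * (Real.exp (b * c i) / B)) *
            Real.exp (α * Real.log A + β * Real.log B)) := by
          gcongr with i; exacts [hp i, hpoint i]
      _ = (α * (A / A) + β * (B / B)) * Real.exp (α * Real.log A + β * Real.log B) := by
          simp only [A, B, sum_div, mul_sum, sum_mul, ← sum_add_distrib]
          refine sum_congr rfl fun i _ => ?_
          ring
      _ = Real.exp (α * Real.log A + β * Real.log B) := by
          rw [div_self hA.ne', div_self hB.ne', mul_one, mul_one, hαβ, one_mul]
  simp only [finCgf, smul_eq_mul]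
  rw [Real.log_le_iff_le_exp (sum_mul_exp_pos hp hs _)]
  exact hsum

end FiniteCgf

def legendreNonneg (φ : ℝ → ℝ) (δ : ℝ) : ℝ := sSup ((fun t => t * δ - φ t) '' Ici 0)

section Legendre

variable {φ : ℝ → ℝ} {V C ℓ : ℝ}

theorem mul_sub_le_of_quadratic_near_zero (hV : 0 < V) (hC : 0 < C) (hℓ : 0 < ℓ)
    (hCℓ : C * ℓ ≤ V / 4) (hconv : ConvexOn ℝ (Ici 0) φ) (hφ0 : φ 0 = 0)
    (hquad : ∀ t ∈ Icc 0 ℓ, |φ t - t ^ 2 * V / 2| ≤ C * t ^ 3)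
    {δ t : ℝ} (hδ : 0 ≤ δ) (hδℓ : δ ≤ ℓ * V / 4) (ht : 0 ≤ t) :
    t * δ - φ t ≤ δ ^ 2 / (2 * V) + 64 * C / V ^ 3 * δ ^ 3 := by
  have hrhs : 0 ≤ δ ^ 2 / (2 * V) + 64 * C / V ^ 3 * δ ^ 3 := by positivity
  rcases le_total t ℓ with htℓ | hℓt
  · have hlow : t ^ 2 * V / 2 - C * t ^ 3 ≤ φ t := by
      linarith [(abs_le.1 (hquad t ⟨ht, htℓ⟩)).1]
    rcases le_total t (4 * δ / V) with hsmall | hlarge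
    · have hquadratic : t * δ - t ^ 2 * V / 2 ≤ δ ^ 2 / (2 * V) := by
        rw [le_div_iff₀ (by positivity)]
        nlinarith [sq_nonneg (t * V - δ)]
      have hcubic : C * t ^ 3 ≤ 64 * C / V ^ 3 * δ ^ 3 := by
        calc C * t ^ 3 ≤ C * (4 * δ / V) ^ 3 := by gcongr
          _ = 64 * C / V ^ 3 * δ ^ 3 := by field_simp; ring
      linarith
    · have hlinear : t * δ ≤ t ^ 2 * V / 4 := by
        rw [div_le_iff₀ hV] at hlarge
        nlinarith
      have hcubic : C * t ^ 3 ≤ t ^ 2 * V / 4 := by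
        calc C * t ^ 3 = C * t * t ^ 2 := by ring
          _ ≤ C * ℓ * t ^ 2 := by gcongr
          _ ≤ V / 4 * t ^ 2 := by gcongr
          _ = t ^ 2 * V / 4 := by ring
      linarith
  · -- beyond `ℓ` the convex function `φ` grows at least linearly, with slope `φ ℓ / ℓ ≥ ℓ V / 4`
    have htpos : 0 < t := hℓ.trans_le hℓt
    have hslope : φ ℓ / ℓ ≤ φ t / t := by
      simpa [hφ0] using hconv.secant_mono self_mem_Ici hℓ.le ht hℓ.ne' htpos.ne' hℓt
    have hφℓ : ℓ * V / 4 ≤ φ ℓ / ℓ := by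
      rw [le_div_iff₀ hℓ]
      nlinarith [(abs_le.1 (hquad ℓ ⟨hℓ.le, le_rfl⟩)).1]
    have hφt : t * (ℓ * V / 4) ≤ φ t := by
      have := hφℓ.trans hslope
      rwa [le_div_iff₀ htpos, mul_comm] at this
    nlinarith

theorem exists_abs_legendreNonneg_sub_quadratic_le (hV : 0 < V) (hC : 0 < C) (hℓ : 0 < ℓ)
    (hconv : ConvexOn ℝ (Ici 0) φ) (hφ0 : φ 0 = 0)
    (hquad : ∀ t ∈ Icc 0 ℓ, |φ t - t ^ 2 * V / 2| ≤ C * t ^ 3) :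
    ∃ δstar : ℝ, 0 < δstar ∧ ∃ K : ℝ, 0 < K ∧ ∀ δ ∈ Ioc (0 : ℝ) δstar,
      |legendreNonneg φ δ - δ ^ 2 / (2 * V)| ≤ K * δ ^ 3 := by
  set ℓ' := min ℓ (V / (4 * C))
  have hℓ' : 0 < ℓ' := lt_min hℓ (by positivity)
  have hCℓ' : C * ℓ' ≤ V / 4 := by
    calc C * ℓ' ≤ C * (V / (4 * C)) := by gcongr; exact min_le_right _ _
      _ = V / 4 := by field_simp
  have hquad' : ∀ t ∈ Icc 0 ℓ', |φ t - t ^ 2 * V / 2| ≤ C * t ^ 3 :=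
    fun t ht => hquad t ⟨ht.1, ht.2.trans (min_le_left _ _)⟩
  refine ⟨ℓ' * V / 4, by positivity, 64 * C / V ^ 3, by positivity, ?_⟩
  rintro δ ⟨hδ, hδle⟩
  have hupper : ∀ y ∈ (fun t => t * δ - φ t) '' Ici 0,
      y ≤ δ ^ 2 / (2 * V) + 64 * C / V ^ 3 * δ ^ 3 := by
    rintro _ ⟨t, ht, rfl⟩
    exact mul_sub_le_of_quadratic_near_zero hV hC hℓ' hCℓ' hconv hφ0 hquad' hδ.le hδle ht
  -- the lower bound comes from the near-optimal slope `t = δ / V`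
  have hδV : δ / V ∈ Icc 0 ℓ' := by
    refine ⟨by positivity, ?_⟩
    rw [div_le_iff₀ hV]
    nlinarith
  have hlower : δ / V * δ - φ (δ / V) ≤ legendreNonneg φ δ :=
    le_csSup ⟨_, hupper⟩ ⟨δ / V, hδV.1, rfl⟩
  have hφ : φ (δ / V) ≤ (δ / V) ^ 2 * V / 2 + C * (δ / V) ^ 3 := by
    linarith [(abs_le.1 (hquad' _ hδV)).2]
  have hcube : C * (δ / V) ^ 3 ≤ 64 * C / V ^ 3 * δ ^ 3 := by
    rw [div_pow, mul_div_assoc', div_mul_eq_mul_div]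
    gcongr
    linarith
  rw [abs_le]
  constructor
  · have : δ / V * δ - (δ / V) ^ 2 * V / 2 = δ ^ 2 / (2 * V) := by field_simp; ring
    linarith
  · have := csSup_le (Set.image_nonempty.2 Set.nonempty_Ici) hupper
    unfold legendreNonneg
    linarith

end Legendre

theorem exists_abs_legendreNonneg_finCgf_sub_quadratic_le {ι : Type*} [Fintype ι]
    {p c : ι → ℝ} (hp : ∀ i, 0 ≤ p i) (hs : ∑ i, p i = 1) (hmean : ∑ i, p i * c i = 0) (hV : 0 < ∑ i, p i * c i ^ 2) :
    ∃ δstar : ℝ, 0 < δstar ∧ ∃ K : ℝ, 0 < K ∧ ∀ δ ∈ Ioc (0 : ℝ) δstar,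
      |legendreNonneg (finCgf p c) δ - δ ^ 2 / (2 * ∑ i, p i * c i ^ 2)| ≤ K * δ ^ 3 := by
  set B := 1 + ∑ i, |c i|
  have hB : 0 < B := by positivity
  have hc (i : ι) : |c i| ≤ B := by
    have := single_le_sum (fun j _ => abs_nonneg (c j)) (mem_univ i)
    linarith
  refine exists_abs_legendreNonneg_sub_quadratic_le hV (by positivity : 0 < 2 * B ^ 3)
    (by positivity : 0 < 1 / (2 * B)) ((convexOn_finCgf hp hs).subset (subset_univ _)
    (convex_Ici 0)) (finCgf_zero hs) fun t ⟨ht₀, htℓ⟩ => ?_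
  have htB : |t| * B ≤ 1 / 2 := by
    rw [abs_of_nonneg ht₀]
    rw [le_div_iff₀ (by positivity)] at htℓ
    linarith
  calc _ ≤ 2 * (|t| * B) ^ 3 := abs_finCgf_sub_quadratic_le hp hs hmean hc htB
    _ = 2 * B ^ 3 * t ^ 3 := by rw [abs_of_nonneg ht₀]; ring

namespace JointPMF

variable {X Y : Type} [Fintype X] [Fintype Y] (P : JointPMF X Y)

def jointProb (z : X × Y) : ℝ := P.p z.1 z.2

def centeredInfo (z : X × Y) : ℝ := -Real.log (P.pXY z.1 z.2) - P.condEnt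

theorem sum_jointProb : ∑ z, P.jointProb z = 1 := by
  rw [Fintype.sum_prod_type]
  exact P.p_sum

theorem sum_jointProb_mul_centeredInfo : ∑ z, P.jointProb z * P.centeredInfo z = 0 := by
  simp only [centeredInfo, mul_sub, sum_sub_distrib, ← sum_mul, sum_jointProb, one_mul]
  rw [condEnt, Fintype.sum_prod_type]
  exact sub_self _

theorem sigma0_eq_sum : P.sigma0 = ∑ z, P.jointProb z * P.centeredInfo z ^ 2 := by
  rw [sigma0, Fintype.sum_prod_type]
  rfl

theorem pY_pos (y : Y) : 0 < P.pY y := by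
  obtain ⟨x₀⟩ : Nonempty X := by
    by_contra h
    simpa [not_nonempty_iff.1 h] using P.p_sum
  exact sum_pos (fun x _ => P.p_pos x y) ⟨x₀, mem_univ x₀⟩

theorem pXY_pos (x : X) (y : Y) : 0 < P.pXY x y :=
  div_pos (P.p_pos x y) (P.pY_pos y)

theorem tiltLogSum_eq (t : ℝ) :
    P.tiltLogSum t = t * P.condEnt + finCgf P.jointProb P.centeredInfo t := by
  have hterm (x : X) (y : Y) : P.pY y * P.pXY x y ^ (1 - t) =
      Real.exp (t * P.condEnt) * (P.jointProb (x, y) * Real.exp (t * P.centeredInfo (x, y))) := by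
    have hpY : P.pY y * P.pXY x y = P.p x y := mul_div_cancel₀ _ (P.pY_pos y).ne'
    have hexponent : Real.log (P.pXY x y) * (1 - t) =
        Real.log (P.pXY x y) + (t * P.condEnt + t * P.centeredInfo (x, y)) := by
      simp only [centeredInfo]; ring
    rw [Real.rpow_def_of_pos (P.pXY_pos x y), hexponent, Real.exp_add, Real.exp_add,
      Real.exp_log (P.pXY_pos x y), jointProb, ← hpY]
    ring
  have hM : 0 < ∑ z, P.jointProb z * Real.exp (t * P.centeredInfo z) :=
    sum_mul_exp_pos (fun z : X × Y => (P.p_pos z.1 z.2).le) P.sum_jointProb t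
  rw [tiltLogSum, finCgf, ← Real.log_exp (t * P.condEnt),
    ← Real.log_mul (Real.exp_pos _).ne' hM.ne', mul_sum, Fintype.sum_prod_type]
  simp only [hterm]

theorem rFun_eq_legendreNonneg (δ : ℝ) :
    P.rFun δ = legendreNonneg (finCgf P.jointProb P.centeredInfo) δ := by
  simp only [rFun, legendreNonneg, tiltLogSum_eq]
  congr 1
  congr 1
  funext t
  ring

end JointPMF

/-- NEP w.r.t. conditional entropy, part (a): assuming
`σ² = sum_{x,y} p(x,y)(-ln p(x|y) - H(X|Y))² > 0`, there are `δ* > 0` and `K > 0` such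
that `|r(δ) - δ²/(2σ²)| ≤ K δ³` for every `δ ∈ (0, δ*]`. -/
theorem nep_condEnt_quadratic {X Y : Type} [Fintype X] [Fintype Y] (P : JointPMF X Y)
    (hσ : 0 < P.sigma0) :
    ∃ δstar : ℝ, 0 < δstar ∧ ∃ K : ℝ, 0 < K ∧
      ∀ δ ∈ Set.Ioc (0 : ℝ) δstar,
        |P.rFun δ - δ ^ 2 / (2 * P.sigma0)| ≤ K * δ ^ 3 := by
  rw [P.sigma0_eq_sum] at hσ ⊢
  simp only [P.rFun_eq_legendreNonneg]
  exact exists_abs_legendreNonneg_finCgf_sub_quadratic_le (fun z => (P.p_pos z.1 z.2).le)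
    P.sum_jointProb P.sum_jointProb_mul_centeredInfo hσ
end
end
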